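/- arXiv:math/0603412 — 2 statements merged into one kernel-verified Lean document; each statement's English description precedes it below -/
import Mathlib

section
/- Let (X, E(X)) be a connected non-oriented multigraph of bounded degree such that |B(x,n)|^{1/n} → 1 as n → ∞ for some vertex x. Then M_w ≤ M_s (hence M_w = M_s). -/
open scoped ENNReal
open Filter

/-- Number of paths of length `n` from `x` to `y` in the multigraph with
edge multiplicities `A x y`, counted with multiplicities (entries of the
`n`-th power of the adjacency matrix). -/
noncomputable def gam {X : Type*} [DecidableEq X] (A : X → X → ℕ) :
    ℕ → X → X → ℝ≥0∞
  | 0, x, y => if x = y then 1 else 0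
  | n + 1, x, y => ∑' w, (A x w : ℝ≥0∞) * gam A n w y

/-!
By symmetry `γ^{2n}_{x,x} = ∑_y (γ^n_{x,y})²`, so every `γ^n_{x,y}` is at most
`(γ^{2n}_{x,x})^{1/2}`, and `T^n_x ≤ |B(x,n)| · (γ^{2n}_{x,x})^{1/2}` since `γ^n_{x,·}` is
supported in `B(x,n)`. Taking `n`-th roots, `|B(x,n)|^{1/n} → 1` leaves
`M_w ≤ limsup_n (γ^{2n}_{x,x})^{1/2n} ≤ M_s`.
-/

lemma ENNReal.tsum_le_encard_mul {α : Type*} {f : α → ℝ≥0∞} {s : Set α} {c : ℝ≥0∞}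
    (hfs : Function.support f ⊆ s) (hfc : ∀ a, f a ≤ c) : ∑' a, f a ≤ s.encard * c := by
  rw [← tsum_subtype_eq_of_support_subset hfs]
  calc ∑' a : s, f a ≤ ∑' _ : s, c := ENNReal.tsum_le_tsum fun a => hfc a
    _ = s.encard * c := ENNReal.tsum_const c

section

variable {X : Type*} [DecidableEq X] (A : X → X → ℕ)

lemma gam_add (m n : ℕ) (x y : X) :
    gam A (m + n) x y = ∑' w, gam A m x w * gam A n w y := by
  induction m generalizing x with
  | zero => simp [gam, ite_mul]
  | succ m ih =>
    calc gam A (m + 1 + n) x y = ∑' w, (A x w : ℝ≥0∞) * ∑' v, gam A m w v * gam A n v y := by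
          rw [Nat.add_right_comm]; simp only [gam, ih]
      _ = ∑' v, (∑' w, (A x w : ℝ≥0∞) * gam A m w v) * gam A n v y := by
          simp_rw [← ENNReal.tsum_mul_left, ← ENNReal.tsum_mul_right, mul_assoc]
          exact ENNReal.tsum_comm
      _ = ∑' v, gam A (m + 1) x v * gam A n v y := rfl

lemma gam_one (x y : X) : gam A 1 x y = A x y := by
  simp [gam]

variable {A}

lemma gam_comm (hsym : ∀ x y, A x y = A y x) (n : ℕ) (x y : X) :
    gam A n x y = gam A n y x := by
  induction n generalizing x y with
  | zero => simp [gam, eq_comm]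
  | succ n ih =>
    rw [gam_add, gam]
    exact tsum_congr fun w => by rw [gam_one, hsym w y, ih x w, mul_comm]

lemma gam_two_mul_self (hsym : ∀ x y, A x y = A y x) (n : ℕ) (x : X) :
    gam A (2 * n) x x = ∑' y, gam A n x y ^ 2 := by
  rw [two_mul, gam_add]
  exact tsum_congr fun y => by rw [gam_comm hsym n y x, sq]

lemma gam_le_rpow_gam_two_mul (hsym : ∀ x y, A x y = A y x) (n : ℕ) (x y : X) :
    gam A n x y ≤ gam A (2 * n) x x ^ (2 : ℝ)⁻¹ := by
  rw [ENNReal.le_rpow_inv_iff two_pos, ENNReal.rpow_two, gam_two_mul_self hsym]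
  exact ENNReal.le_tsum y

lemma rpow_tsum_gam_le (hsym : ∀ x y, A x y = A y x) (n : ℕ) (x : X) {s : Set X}
    (hs : Function.support (gam A n x) ⊆ s) :
    (∑' y, gam A n x y) ^ (1 / (n : ℝ))
      ≤ (s.encard : ℝ≥0∞) ^ (1 / (n : ℝ)) * gam A (2 * n) x x ^ (1 / ((2 * n : ℕ) : ℝ)) := by
  calc (∑' y, gam A n x y) ^ (1 / (n : ℝ))
      ≤ (s.encard * gam A (2 * n) x x ^ (2 : ℝ)⁻¹) ^ (1 / (n : ℝ)) := by
        gcongr; exact ENNReal.tsum_le_encard_mul hs (gam_le_rpow_gam_two_mul hsym n x)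
    _ = _ := by
        rw [ENNReal.mul_rpow_of_nonneg _ _ (by positivity), ← ENNReal.rpow_mul]
        push_cast
        ring_nf

end

theorem stmt6_general {X : Type*} [DecidableEq X] (A : X → X → ℕ)
    (hsym : ∀ x y, A x y = A y x)
    (x : X)
    (hball : Tendsto
      (fun n : ℕ => (({y : X | ∃ i ≤ n, gam A i x y ≠ 0}.encard : ℝ≥0∞)) ^ (1 / (n : ℝ)))
      atTop (nhds 1)) :
    limsup (fun n => (∑' y, gam A n x y) ^ (1 / (n : ℝ))) atTop
        ≤ limsup (fun n => gam A n x x ^ (1 / (n : ℝ))) atTop ∧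
    limsup (fun n => (∑' y, gam A n x y) ^ (1 / (n : ℝ))) atTop
        = limsup (fun n => gam A n x x ^ (1 / (n : ℝ))) atTop := by
  set b := fun n : ℕ => (({y : X | ∃ i ≤ n, gam A i x y ≠ 0}.encard : ℝ≥0∞)) ^ (1 / (n : ℝ))
  set d := fun n : ℕ => gam A n x x ^ (1 / (n : ℝ))
  have hroot : ∀ n, (∑' y, gam A n x y) ^ (1 / (n : ℝ)) ≤ (b * (d ∘ (2 * ·))) n := fun n =>
    rpow_tsum_gam_le hsym n x fun y hy => ⟨n, le_rfl, hy⟩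
  have heven : limsup (d ∘ (2 * ·)) atTop ≤ limsup d atTop :=
    (tendsto_id.const_mul_atTop' two_pos).limsup_comp_le_limsup
  have hle : limsup (fun n => (∑' y, gam A n x y) ^ (1 / (n : ℝ))) atTop ≤ limsup d atTop :=
    calc _ ≤ limsup (b * (d ∘ (2 * ·))) atTop := limsup_le_limsup (.of_forall hroot)
      _ ≤ limsup b atTop * limsup (d ∘ (2 * ·)) atTop :=
          ENNReal.limsup_mul_le' (by simp [hball.limsup_eq]) (by simp [hball.limsup_eq])
      _ ≤ limsup d atTop := by rwa [hball.limsup_eq, one_mul]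
  refine ⟨hle, le_antisymm hle (limsup_le_limsup (.of_forall fun n => ?_))⟩
  exact ENNReal.rpow_le_rpow (ENNReal.le_tsum x) (by positivity)

theorem stmt6 {X : Type*} [DecidableEq X] (A : X → X → ℕ)
    (hsym : ∀ x y, A x y = A y x) (M : ℕ)
    (hdeg : ∀ x, ∑' y, (A x y : ℝ≥0∞) ≤ M)
    (hconn : ∀ x y : X, ∃ n, 0 < n ∧ gam A n x y ≠ 0)
    (x : X)
    (hball : Tendsto
      (fun n : ℕ => (({y : X | ∃ i ≤ n, gam A i x y ≠ 0}.encard : ℝ≥0∞)) ^ (1 / (n : ℝ)))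
      atTop (nhds 1)) :
    limsup (fun n => (∑' y, gam A n x y) ^ (1 / (n : ℝ))) atTop
        ≤ limsup (fun n => gam A n x x ^ (1 / (n : ℝ))) atTop ∧
    limsup (fun n => (∑' y, gam A n x y) ^ (1 / (n : ℝ))) atTop
        = limsup (fun n => gam A n x x ^ (1 / (n : ℝ))) atTop :=
  stmt6_general A hsym x hball
end

section
/- Consider a generalized multitype branching process indexed by a rooted tree in which each individual x has a random offspring configuration Z_x (an almost surely finite ℕ-valued function on types), the variables {Z_x} are independent, and the distribution of Z_x depends only on the father and type of x. Let G_x be the probability generating function of the total number S(Z_x) of children of x. If there exists δ ∈ [0,1) with G_x(δ) ≤ δ for all individuals x, then the probability of eventual extinction is at most δ. -/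
/-!
Write `ExtinctBy Z n v` for the event that the subtree rooted at `v` has no individual `n`
generations below `v`. It holds for `n + 1` exactly when it holds for `n` at every child of `v`.
On `{Z v = g}` these child events depend on the offspring variables of pairwise disjoint
subtrees, so they are independent of each other and of `Z v`; by induction on `n`,
`P (ExtinctBy Z (n + 1) v) ≤ ∑_g P (Z v = g) δ ^ |g| = G_v(δ) ≤ δ`. Extinction is the
increasing union of these events at the root.
-/

open MeasureTheory ProbabilityTheory
open scoped ENNReal

/-- `Realized Z ω v` means that the individual encoded by `v` is actually born
in the realization `ω` of the generalized branching process with offspring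
variables `Z`.  An individual is a list of pairs `(i, j)` (most recent ancestor
first): `(i, j) :: v` is the `j`-th child of type `i` of `v`; the root is `[]`.
`Z v ω i` is the number of children of type `i` of the individual `v`. -/
def Realized {Ω : Type*} (Z : List (ℕ × ℕ) → Ω → ℕ → ℕ) (ω : Ω) :
    List (ℕ × ℕ) → Prop
  | [] => True
  | (i, j) :: v => Realized Z ω v ∧ 1 ≤ j ∧ j ≤ Z v ω i

section FamilySigma

variable {ι Ω β : Type*} [mβ : MeasurableSpace β]

abbrev familySigma (Z : ι → Ω → β) (S : Set ι) : MeasurableSpace Ω :=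
  ⨆ u ∈ S, mβ.comap (Z u)

lemma comap_le_familySigma (Z : ι → Ω → β) {S : Set ι} {u : ι} (hu : u ∈ S) :
    mβ.comap (Z u) ≤ familySigma Z S :=
  le_iSup₂ (f := fun u (_ : u ∈ S) => mβ.comap (Z u)) u hu

lemma familySigma_mono (Z : ι → Ω → β) {S T : Set ι} (h : S ⊆ T) :
    familySigma Z S ≤ familySigma Z T :=
  iSup₂_le fun _ hu => comap_le_familySigma Z (h hu)

lemma ProbabilityTheory.iIndepFun.indep_familySigma_compl [MeasurableSpace Ω] {P : Measure Ω}
    {Z : ι → Ω → β} (hmeas : ∀ u, Measurable (Z u)) (hindep : iIndepFun Z P) (S : Set ι) :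
    Indep (familySigma Z S) (familySigma Z Sᶜ) P :=
  indep_iSup_of_disjoint (fun u => (hmeas u).comap_le) hindep.iIndep disjoint_compl_right

end FamilySigma

lemma Finsupp.hasSum_degree {ι M : Type*} [AddCommMonoid M] [TopologicalSpace M]
    (g : ι →₀ M) : HasSum g g.degree :=
  hasSum_sum_of_ne_finset_zero fun _ => Finsupp.notMem_support_iff.1

lemma Nat.hasSum_iff_exists_finsupp {ι : Type*} {f : ι → ℕ} {k : ℕ} :
    HasSum f k ↔ ∃ g : ι →₀ ℕ, ⇑g = f ∧ g.degree = k := by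
  refine ⟨fun h => ?_, ?_⟩
  · have hfin : f.support.Finite := by
      simpa [Function.HasFiniteSupport, Function.support] using
        (h.map (Nat.castAddMonoidHom ℤ) continuous_of_discreteTopology).summable
          |>.hasFiniteSupport_of_discreteTopology
    refine ⟨Finsupp.ofSupportFinite f hfin, Finsupp.ofSupportFinite_coe, ?_⟩
    exact (Finsupp.hasSum_degree _).unique (by rwa [Finsupp.ofSupportFinite_coe])
  · rintro ⟨g, rfl, rfl⟩
    exact g.hasSum_degree

def childLabels {ι : Type*} (g : ι →₀ ℕ) : Finset (ι × ℕ) :=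
  (g.support.sigma fun i => Finset.Icc 1 (g i)).map (Equiv.sigmaEquivProd ι ℕ).toEmbedding

lemma mem_childLabels {ι : Type*} {g : ι →₀ ℕ} {i : ι} {j : ℕ} :
    (i, j) ∈ childLabels g ↔ 1 ≤ j ∧ j ≤ g i := by
  simp only [childLabels, Finset.mem_map_equiv, Equiv.sigmaEquivProd_symm_apply,
    Finset.mem_sigma, Finsupp.mem_support_iff, Finset.mem_Icc]
  omega

lemma card_childLabels {ι : Type*} (g : ι →₀ ℕ) : (childLabels g).card = g.degree := by
  simp [childLabels, Finsupp.degree_apply]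

lemma measure_le_tsum_inter_preimage_finsupp {Ω ι M : Type*} [MeasurableSpace Ω] [Zero M]
    [Countable (ι →₀ M)] {P : Measure Ω} {f : Ω → ι → M}
    (hf : ∀ᵐ ω ∂P, (f ω).support.Finite) (A : Set Ω) :
    P A ≤ ∑' g : ι →₀ M, P (A ∩ f ⁻¹' {⇑g}) := by
  calc P A ≤ P (⋃ g : ι →₀ M, A ∩ f ⁻¹' {⇑g}) := measure_mono_ae ?_
    _ ≤ _ := measure_iUnion_le _
  filter_upwards [hf] with ω hω hA
  exact Set.mem_iUnion.2 ⟨Finsupp.ofSupportFinite _ hω, hA, Finsupp.ofSupportFinite_coe.symm⟩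

lemma tsum_measure_preimage_mul_pow_degree {Ω ι : Type*} [MeasurableSpace Ω] [Countable ι]
    {P : Measure Ω} {f : Ω → ι → ℕ} (hf : Measurable f) (δ : ℝ≥0∞) :
    ∑' g : ι →₀ ℕ, P (f ⁻¹' {⇑g}) * δ ^ g.degree =
      ∑' k : ℕ, P {ω | HasSum (f ω) k} * δ ^ k := by
  have hfiber (k : ℕ) : P {ω | HasSum (f ω) k} =
      ∑' g : {g : ι →₀ ℕ // g.degree = k}, P (f ⁻¹' {⇑g.1}) := by
    have : {ω | HasSum (f ω) k} = ⋃ g : {g : ι →₀ ℕ // g.degree = k}, f ⁻¹' {⇑g.1} := by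
      ext ω
      simp [Nat.hasSum_iff_exists_finsupp, eq_comm, and_comm]
    rw [this, measure_iUnion _ fun g => hf (MeasurableSet.singleton _)]
    exact fun g g' hne => Set.disjoint_left.2 fun ω h h' =>
      hne (Subtype.ext (DFunLike.coe_injective (h.symm.trans h')))
  rw [← (Equiv.sigmaFiberEquiv Finsupp.degree).tsum_eq, ENNReal.tsum_sigma']
  simp_rw [hfiber, ← ENNReal.tsum_mul_right]
  refine tsum_congr fun k => tsum_congr fun g => ?_
  rw [Equiv.sigmaFiberEquiv_apply, g.2]

lemma measure_inter_biInter_le_mul_pow {Ω α β : Type*} [MeasurableSpace Ω] [MeasurableSpace β]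
    {P : Measure Ω} {Z : List α → Ω → β} (hmeas : ∀ u, Measurable (Z u))
    (hindep : iIndepFun Z P) {E : List α → Set Ω} {v : List α} {δ : ℝ≥0∞}
    (hE : ∀ c, MeasurableSet[familySigma Z {u | c :: v <:+ u}] (E (c :: v)))
    (hEδ : ∀ c, P (E (c :: v)) ≤ δ) (F : Finset α) {A : Set Ω}
    (hA : MeasurableSet[familySigma Z {u | ∀ c ∈ F, ¬ c :: v <:+ u}] A) :
    P (A ∩ ⋂ c ∈ F, E (c :: v)) ≤ P A * δ ^ F.card := by
  classical
  induction F using Finset.induction_on with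
  | empty => simp
  | insert c₀ F hc₀ ih =>
    set S : Set (List α) := {u | c₀ :: v <:+ u}
    have hsplit : {u | ∀ c ∈ insert c₀ F, ¬ c :: v <:+ u} ⊆
        {u | ∀ c ∈ F, ¬ c :: v <:+ u} ∩ Sᶜ := fun _ hu =>
      ⟨fun c hc => hu c (Finset.mem_insert_of_mem hc), hu c₀ (F.mem_insert_self c₀)⟩
    have hrest : MeasurableSet[familySigma Z Sᶜ] (A ∩ ⋂ c ∈ F, E (c :: v)) := by
      refine .inter (familySigma_mono Z (hsplit.trans Set.inter_subset_right) _ hA)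
        (.biInter F.countable_toSet fun c hc => familySigma_mono Z ?_ _ (hE c))
      -- the subtrees of distinct children of `v` are disjoint
      intro u hcu hc₀u
      have h := List.suffix_of_suffix_length_le hcu hc₀u (by simp)
      obtain rfl : c = c₀ := (List.cons.inj (h.eq_of_length (by simp))).1
      exact hc₀ hc
    have hindepS :=
      (Indep_iff _ _ _).1 (hindep.indep_familySigma_compl hmeas S) _ _ (hE c₀) hrest
    calc P (A ∩ ⋂ c ∈ insert c₀ F, E (c :: v))
        = P (E (c₀ :: v)) * P (A ∩ ⋂ c ∈ F, E (c :: v)) := by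
          rw [Finset.set_biInter_insert, Set.inter_left_comm, hindepS]
      _ ≤ δ * (P A * δ ^ F.card) :=
          mul_le_mul' (hEδ c₀) (ih (familySigma_mono Z (hsplit.trans Set.inter_subset_left) _ hA))
      _ = P A * δ ^ (insert c₀ F).card := by
          rw [Finset.card_insert_of_notMem hc₀, pow_succ]; ring

section Extinction

variable {Ω : Type*} (Z : List (ℕ × ℕ) → Ω → ℕ → ℕ)

def ExtinctBy : ℕ → List (ℕ × ℕ) → Set Ω
  | 0, _ => ∅
  | n + 1, v => {ω | ∀ i j, 1 ≤ j → j ≤ Z v ω i → ω ∈ ExtinctBy n ((i, j) :: v)}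

lemma extinctBy_subset_succ : ∀ (n : ℕ) (v : List (ℕ × ℕ)),
    ExtinctBy Z n v ⊆ ExtinctBy Z (n + 1) v
  | 0, _ => Set.empty_subset _
  | n + 1, _ => fun _ hω i j h₁ h₂ => extinctBy_subset_succ n _ (hω i j h₁ h₂)

lemma mem_extinctBy_of_forall_not_realized {ω : Ω} :
    ∀ (n : ℕ) (v : List (ℕ × ℕ)), Realized Z ω v →
      (∀ w : List (ℕ × ℕ), w.length = n + v.length → ¬ Realized Z ω w) →
      ω ∈ ExtinctBy Z n v
  | 0, v, hv, hdead => hdead v (by simp) hv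
  | n + 1, v, hv, hdead => fun i j h₁ h₂ =>
      mem_extinctBy_of_forall_not_realized n _ ⟨hv, h₁, h₂⟩
        fun w hw => hdead w (by simp [hw]; omega)

lemma measurableSet_extinctBy [MeasurableSpace Ω] :
    ∀ (n : ℕ) (v : List (ℕ × ℕ)),
      MeasurableSet[familySigma Z {u | v <:+ u}] (ExtinctBy Z n v)
  | 0, _ => (familySigma Z _).measurableSet_empty
  | n + 1, v => by
    have hchild (i j : ℕ) : MeasurableSet[familySigma Z {u | v <:+ u}]
        {ω | ω ∈ ExtinctBy Z n ((i, j) :: v)} :=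
      familySigma_mono Z (fun _ hu => (List.suffix_cons _ v).trans hu) _
        (measurableSet_extinctBy n _)
    have hborn (i j : ℕ) : MeasurableSet[familySigma Z {u | v <:+ u}] {ω | j ≤ Z v ω i} :=
      comap_le_familySigma Z (List.suffix_refl v) _
        ⟨_, measurable_pi_apply i (MeasurableSet.of_discrete (s := Set.Ici j)), rfl⟩
    simp only [ExtinctBy, Set.ofPred_forall]
    exact .iInter fun i => .iInter fun j => .iInter fun _ => (hborn i j).imp (hchild i j)

lemma extinctBy_succ_inter_preimage_subset (n : ℕ) (v : List (ℕ × ℕ)) (g : ℕ →₀ ℕ) :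
    ExtinctBy Z (n + 1) v ∩ Z v ⁻¹' {⇑g} ⊆
      Z v ⁻¹' {⇑g} ∩ ⋂ c ∈ childLabels g, ExtinctBy Z n (c :: v) := by
  rintro ω ⟨hω, hg⟩
  refine ⟨hg, Set.mem_iInter₂.2 fun ⟨i, j⟩ hc => ?_⟩
  rw [mem_childLabels, ← show Z v ω = ⇑g from hg] at hc
  exact hω i j hc.1 hc.2

end Extinction

lemma measure_extinctBy_succ_le {Ω : Type*} [MeasurableSpace Ω] {P : Measure Ω}
    {Z : List (ℕ × ℕ) → Ω → ℕ → ℕ} (hmeas : ∀ v, Measurable (Z v)) (hindep : iIndepFun Z P)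
    (hfin : ∀ v, ∀ᵐ ω ∂P, (Function.support (Z v ω)).Finite) {δ : ℝ≥0∞} {n : ℕ}
    (hn : ∀ u, P (ExtinctBy Z n u) ≤ δ) (v : List (ℕ × ℕ)) :
    P (ExtinctBy Z (n + 1) v) ≤ ∑' k : ℕ, P {ω | HasSum (Z v ω) k} * δ ^ k := by
  have hoffspring (g : ℕ →₀ ℕ) : MeasurableSet[familySigma Z
      {u | ∀ c ∈ childLabels g, ¬ c :: v <:+ u}] (Z v ⁻¹' {⇑g}) :=
    comap_le_familySigma Z (fun _ _ h => by simpa using h.length_le) _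
      ⟨{⇑g}, MeasurableSet.singleton _, rfl⟩
  calc P (ExtinctBy Z (n + 1) v)
      ≤ ∑' g : ℕ →₀ ℕ, P (ExtinctBy Z (n + 1) v ∩ Z v ⁻¹' {⇑g}) :=
        measure_le_tsum_inter_preimage_finsupp (hfin v) _
    _ ≤ ∑' g : ℕ →₀ ℕ, P (Z v ⁻¹' {⇑g}) * δ ^ g.degree := ENNReal.tsum_le_tsum fun g => by
        rw [← card_childLabels]
        exact (measure_mono (extinctBy_succ_inter_preimage_subset Z n v g)).trans
          (measure_inter_biInter_le_mul_pow hmeas hindep (E := ExtinctBy Z n)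
            (fun _ => measurableSet_extinctBy Z n _) (fun _ => hn _) _ (hoffspring g))
    _ = ∑' k : ℕ, P {ω | HasSum (Z v ω) k} * δ ^ k :=
        tsum_measure_preimage_mul_pow_degree (hmeas v) δ

lemma measure_extinctBy_le {Ω : Type*} [MeasurableSpace Ω] {P : Measure Ω}
    {Z : List (ℕ × ℕ) → Ω → ℕ → ℕ} (hmeas : ∀ v, Measurable (Z v)) (hindep : iIndepFun Z P)
    (hfin : ∀ v, ∀ᵐ ω ∂P, (Function.support (Z v ω)).Finite) {δ : ℝ≥0∞}
    (hG : ∀ v, ∑' k : ℕ, P {ω | HasSum (Z v ω) k} * δ ^ k ≤ δ) (n : ℕ) (v : List (ℕ × ℕ)) :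
    P (ExtinctBy Z n v) ≤ δ := by
  induction n generalizing v with
  | zero => simp [ExtinctBy]
  | succ n ih => exact (measure_extinctBy_succ_le hmeas hindep hfin ih v).trans (hG v)

lemma setOf_extinct_subset_iUnion_extinctBy {Ω : Type*} (Z : List (ℕ × ℕ) → Ω → ℕ → ℕ) :
    {ω | ∃ N, ∀ n ≥ N, ∀ v : List (ℕ × ℕ), v.length = n → ¬ Realized Z ω v} ⊆
      ⋃ N, ExtinctBy Z N [] := fun ω ⟨N, hN⟩ =>
  Set.mem_iUnion.2 ⟨N, mem_extinctBy_of_forall_not_realized Z N [] trivial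
    fun w hw => hN N le_rfl w (by simpa using hw)⟩

theorem stmt11_general {Ω : Type*} [MeasurableSpace Ω] (P : Measure Ω)
    (Z : List (ℕ × ℕ) → Ω → ℕ → ℕ)
    (hmeas : ∀ v, Measurable (Z v))
    (hindep : iIndepFun Z P)
    (hfin : ∀ v, ∀ᵐ ω ∂P, (Function.support (Z v ω)).Finite)
    (δ : ℝ≥0∞)
    -- `G_x(δ) ≤ δ` where `G_x` is the generating function of the total number
    -- of children of `x`  (`HasSum (Z v ω) k` says this total number is `k`)
    (hG : ∀ v, ∑' k : ℕ, P {ω | HasSum (Z v ω) k} * δ ^ k ≤ δ) :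
    P {ω | ∃ N, ∀ n ≥ N, ∀ v : List (ℕ × ℕ), v.length = n → ¬ Realized Z ω v}
      ≤ δ :=
  calc P {ω | ∃ N, ∀ n ≥ N, ∀ v : List (ℕ × ℕ), v.length = n → ¬ Realized Z ω v}
      ≤ P (⋃ N, ExtinctBy Z N []) := measure_mono (setOf_extinct_subset_iUnion_extinctBy Z)
    _ = ⨆ N, P (ExtinctBy Z N []) :=
        (monotone_nat_of_le_succ fun n => extinctBy_subset_succ Z n []).measure_iUnion
    _ ≤ δ := iSup_le fun N => measure_extinctBy_le hmeas hindep hfin hG N []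

theorem stmt11 {Ω : Type*} [MeasurableSpace Ω] (P : Measure Ω)
    [IsProbabilityMeasure P]
    (Z : List (ℕ × ℕ) → Ω → ℕ → ℕ)
    (hmeas : ∀ v, Measurable (Z v))
    (hindep : iIndepFun Z P)
    (hfin : ∀ v, ∀ᵐ ω ∂P, (Function.support (Z v ω)).Finite)
    (hdist : ∀ (v : List (ℕ × ℕ)) (i j k : ℕ),
      Measure.map (Z ((i, j) :: v)) P = Measure.map (Z ((i, k) :: v)) P)
    (δ : ℝ≥0∞) (hδ : δ < 1)
    -- `G_x(δ) ≤ δ` where `G_x` is the generating function of the total number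
    -- of children of `x`  (`HasSum (Z v ω) k` says this total number is `k`)
    (hG : ∀ v, ∑' k : ℕ, P {ω | HasSum (Z v ω) k} * δ ^ k ≤ δ) :
    P {ω | ∃ N, ∀ n ≥ N, ∀ v : List (ℕ × ℕ), v.length = n → ¬ Realized Z ω v}
      ≤ δ :=
  stmt11_general P Z hmeas hindep hfin δ hG
end
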